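/- For integers s ≥ 1, t ≥ 0 and n > s + t, the weighted sums satisfy the recursion W^B_{s,t}(n) = Σ_{i=0}^{s−1} binom(n−2, i) · τ^B_{s−i,t}(n−i). -/

import Mathlib

open scoped Classical

noncomputable section

/-- `[r]_q = 1 + q + ... + q^(r-1)`, with `[0]_q = 0`. -/
def qa (q : ℝ) (r : ℕ) : ℝ := ∑ m ∈ Finset.range r, q ^ m

/-- The factor contributed by an element `a` of the first row that is linked to `b`
when the set of available elements of the second row is `D`: if `b` is the `m`-th
element of `D` in increasing order of cyclic distance `(· - a) mod k`
(the ring `Z_k` being identified with `{1, …, k}`) and `r = |D|`, the factor is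
`q^(m-1) / [r]_q`. -/
def stepW (q : ℝ) (k a : ℕ) (D : Finset ℕ) (b : ℕ) : ℝ :=
  q ^ ((D.filter fun c => (c + k - a) % k < (b + k - a) % k).card) / qa q D.card

/-- Product of the factors obtained by processing the elements of the first list
in order, starting with available set `D`; each processed `a` is linked to `F a`,
which then becomes unavailable. -/
def chainW (q : ℝ) (k : ℕ) (F : ℕ → ℕ) : List ℕ → Finset ℕ → ℝ
  | [], _ => 1
  | a :: l, D => stepW q k a D (F a) * chainW q k F l (D.erase (F a))

/-- The weight `wt(A, B, F)` of a linked two-row multiline queue on `Z_k = {1,…,k}`: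
trivial links (elements of `A ∩ B`, linked to themselves) contribute a factor `1`;
the elements of `A \ B` are processed in increasing order, the initially available
elements of the second row being those of `B \ A`. -/
def mlqW (q : ℝ) (k : ℕ) (A B : Finset ℕ) (F : ℕ → ℕ) : ℝ :=
  chainW q k F ((A \ B).sort (· ≤ ·)) (B \ A)

/-- Extend an injection `f : A ↪ B` to a function `ℕ → ℕ` (identity off `A`). -/
def extendF (A B : Finset ℕ) (f : ↥A ↪ ↥B) : ℕ → ℕ :=
  fun x => if h : x ∈ A then (f ⟨x, h⟩).1 else x

/-- Sum of the weights `wt(A, B, f)` over all two-row multiline queues `(A, B)` on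
`Z_k = {1,…,k}` and all linkings `f` of `(A, B)` (injections `f : A → B` with
`f a = a` for all `a ∈ A ∩ B`) satisfying the condition `cond A B f`. -/
def mlqSum (q : ℝ) (k : ℕ)
    (cond : Finset ℕ → Finset ℕ → (ℕ → ℕ) → Prop) : ℝ :=
  ∑ A ∈ (Finset.Icc 1 k).powerset, ∑ B ∈ (Finset.Icc 1 k).powerset,
    ∑ f : (↥A ↪ ↥B),
      if (∀ a ∈ A ∩ B, extendF A B f a = a) ∧ cond A B (extendF A B f)
      then mlqW q k A B (extendF A B f) else 0

/-- `η_{s,t}(k)`: the total weight of linked two-row multiline queues of type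
`(s, t, k-s-t)` on `Z_k` with disjoint rows whose projected word begins with `2`
(i.e. `1 ∈ B \ f(A)`). -/
def eta (q : ℝ) (s t k : ℕ) : ℝ :=
  mlqSum q k fun A B F =>
    A ∩ B = ∅ ∧ A.card = s ∧ B.card = s + t ∧ 1 ∈ B ∧ 1 ∉ A.image F

/-- `W^A_{s,t}(n)`: total weight of linked MLQs of type `(s,t,n-s-t)` with
`1 ∉ A`, `2 ∉ A`, `1 ∉ B`, `2 ∈ B`, `2 ∉ f(A)` (projected word begins with `3,2`). -/
def WA (q : ℝ) (s t n : ℕ) : ℝ :=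
  mlqSum q n fun A B F =>
    A.card = s ∧ B.card = s + t ∧ 1 ∉ A ∧ 2 ∉ A ∧ 1 ∉ B ∧ 2 ∈ B ∧ 2 ∉ A.image F

/-- `τ^A_{s,t}(n)`: as `W^A_{s,t}(n)`, restricted to `A ∩ B = ∅`. -/
def tauA (q : ℝ) (s t n : ℕ) : ℝ :=
  mlqSum q n fun A B F =>
    A ∩ B = ∅ ∧
    A.card = s ∧ B.card = s + t ∧ 1 ∉ A ∧ 2 ∉ A ∧ 1 ∉ B ∧ 2 ∈ B ∧ 2 ∉ A.image F

/-- `W^B_{s,t}(n)`: total weight of linked MLQs of type `(s,t,n-s-t)` with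
`1 ∈ A`, `2 ∉ A`, `1 ∉ B`, `2 ∈ B`, `2 ∉ f(A)` (projected word begins with `3,2`). -/
def WB (q : ℝ) (s t n : ℕ) : ℝ :=
  mlqSum q n fun A B F =>
    A.card = s ∧ B.card = s + t ∧ 1 ∈ A ∧ 2 ∉ A ∧ 1 ∉ B ∧ 2 ∈ B ∧ 2 ∉ A.image F

/-- `τ^B_{s,t}(n)`: as `W^B_{s,t}(n)`, restricted to `A ∩ B = ∅`. -/
def tauB (q : ℝ) (s t n : ℕ) : ℝ :=
  mlqSum q n fun A B F =>
    A ∩ B = ∅ ∧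
    A.card = s ∧ B.card = s + t ∧ 1 ∈ A ∧ 2 ∉ A ∧ 1 ∉ B ∧ 2 ∈ B ∧ 2 ∉ A.image F

/-- `W^C_{s,t}(n)`: total weight of linked MLQs of type `(s,t,n-s-t)` with
`1 ∉ A`, `2 ∉ A`, `1 ∈ B`, `2 ∉ B`, `1 ∉ f(A)` (projected word begins with `2,3`). -/
def WC (q : ℝ) (s t n : ℕ) : ℝ :=
  mlqSum q n fun A B F =>
    A.card = s ∧ B.card = s + t ∧ 1 ∉ A ∧ 2 ∉ A ∧ 1 ∈ B ∧ 2 ∉ B ∧ 1 ∉ A.image F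

/-- `W^D_{s,t}(n)`: total weight of linked MLQs of type `(s,t,n-s-t)` with
`1 ∉ A`, `2 ∈ A`, `1 ∈ B`, `2 ∉ B`, `1 ∉ f(A)` (projected word begins with `2,3`). -/
def WD (q : ℝ) (s t n : ℕ) : ℝ :=
  mlqSum q n fun A B F =>
    A.card = s ∧ B.card = s + t ∧ 1 ∉ A ∧ 2 ∈ A ∧ 1 ∈ B ∧ 2 ∉ B ∧ 1 ∉ A.image F

/-- `τ^D_{s,t}(n)`: as `W^D_{s,t}(n)`, restricted to `A ∩ B = ∅`. -/
def tauD (q : ℝ) (s t n : ℕ) : ℝ :=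
  mlqSum q n fun A B F =>
    A ∩ B = ∅ ∧
    A.card = s ∧ B.card = s + t ∧ 1 ∉ A ∧ 2 ∈ A ∧ 1 ∈ B ∧ 2 ∉ B ∧ 1 ∉ A.image F

end

/-!
Group the linked queues counted by `W^B_{s,t}(n)` by their set `S = A ∩ B` of trivial links;
since `1 ∉ B` and `2 ∉ A`, `S` is a subset of `{3, …, n}`. Deleting `S` from both rows and from
`Z_n` and closing the gaps (`compress S`) is a bijection onto the linked queues with disjoint rows
of type `(s - |S|, t, ·)` on `Z_{n-|S|}`, and the conditions at `1` and `2` survive because no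
element of `S` lies below them. It preserves weights: trivial links contribute `1`, and the factor
of a non-trivial link only depends on the cyclic order of the available sites seen from it,
which a monotone relabelling does not change. So the fiber over `S` contributes
`τ^B_{s-|S|,t}(n-|S|)`; there are `binom(n-2, i)` sets `S` of size `i`, and `τ^B_{0,t} = 0`.
-/

open Finset

lemma Finset.sort_image_of_strictMonoOn {α β : Type*} [LinearOrder α] [LinearOrder β]
    {X : Finset α} {φ : α → β} (hφ : StrictMonoOn φ X) :
    (X.image φ).sort (· ≤ ·) = (X.sort (· ≤ ·)).map φ := by
  rw [Finset.sort, image_val_of_injOn hφ.injOn, Finset.sort,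
    Multiset.map_sort _ _ _ _ fun a ha b hb => (hφ.le_iff_le ha hb).symm]

lemma Finset.image_erase_of_injOn {α β : Type*} [DecidableEq α] [DecidableEq β]
    {X T : Finset α} {φ : α → β} (hφ : Set.InjOn φ T) (hX : X ⊆ T) {b : α} (hb : b ∈ T) :
    (X.erase b).image φ = (X.image φ).erase (φ b) := by
  ext y
  simp only [mem_image, mem_erase]
  constructor
  · rintro ⟨x, ⟨hxb, hx⟩, rfl⟩
    exact ⟨fun h => hxb (hφ (hX hx) hb h), x, hx, rfl⟩
  · rintro ⟨hne, x, hx, rfl⟩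
    exact ⟨x, ⟨by rintro rfl; exact hne rfl, hx⟩, rfl⟩

lemma Finset.union_sdiff_union_of_disjoint {α : Type*} [DecidableEq α] {X Y Z : Finset α}
    (hXY : Disjoint X Y) (hXZ : Disjoint X Z) : (X ∪ Z) \ (Y ∪ Z) = X := by
  rw [union_sdiff_distrib, sdiff_eq_self_of_disjoint (disjoint_union_right.2 ⟨hXY, hXZ⟩),
    sdiff_eq_empty_iff_subset.2 subset_union_right, union_empty]

def cyclicDist (k a x : ℕ) : ℕ := (x + k - a) % k

lemma cyclicDist_eq {k a x : ℕ} (ha : a ∈ Icc 1 k) (hx : x ∈ Icc 1 k) :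
    cyclicDist k a x = if a ≤ x then x - a else x + k - a := by
  rw [mem_Icc] at ha hx
  unfold cyclicDist
  split_ifs
  · rw [show x + k - a = x - a + k by omega, Nat.add_mod_right, Nat.mod_eq_of_lt (by omega)]
  · exact Nat.mod_eq_of_lt (by omega)

lemma cyclicDist_lt_cyclicDist_iff {k a b c : ℕ} (ha : a ∈ Icc 1 k) (hb : b ∈ Icc 1 k)
    (hc : c ∈ Icc 1 k) :
    cyclicDist k a c < cyclicDist k a b ↔ b < a ∧ a ≤ c ∨ (a ≤ b ↔ a ≤ c) ∧ c < b := by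
  rw [cyclicDist_eq ha hb, cyclicDist_eq ha hc]
  rw [mem_Icc] at ha hb hc
  split_ifs <;> omega

lemma StrictMonoOn.cyclicDist_lt_cyclicDist_iff {n m : ℕ} {φ : ℕ → ℕ} {T : Set ℕ}
    (hφ : StrictMonoOn φ T) (hT : T ⊆ Icc 1 n) (hmaps : Set.MapsTo φ T (Icc 1 m))
    {a b c : ℕ} (ha : a ∈ T) (hb : b ∈ T) (hc : c ∈ T) :
    cyclicDist m (φ a) (φ c) < cyclicDist m (φ a) (φ b) ↔
      cyclicDist n a c < cyclicDist n a b := by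
  rw [_root_.cyclicDist_lt_cyclicDist_iff (hmaps ha) (hmaps hb) (hmaps hc),
    _root_.cyclicDist_lt_cyclicDist_iff (hT ha) (hT hb) (hT hc), hφ.lt_iff_lt hb ha,
    hφ.le_iff_le ha hb, hφ.le_iff_le ha hc, hφ.lt_iff_lt hc hb]

section WeightTransport

variable {q : ℝ} {n m : ℕ} {φ : ℕ → ℕ} {T : Finset ℕ}

lemma stepW_image (hφ : StrictMonoOn φ T) (hT : T ⊆ Icc 1 n)
    (hmaps : Set.MapsTo φ T (Icc 1 m)) {D : Finset ℕ} (hD : D ⊆ T) {a b : ℕ} (ha : a ∈ T)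
    (hb : b ∈ T) :
    stepW q m (φ a) (D.image φ) (φ b) = stepW q n a D b := by
  have hinj : Set.InjOn φ D := hφ.injOn.mono (coe_subset.2 hD)
  unfold stepW
  rw [filter_image, card_image_of_injOn (hinj.mono (filter_subset _ _)),
    card_image_of_injOn hinj]
  congr 3
  exact filter_congr fun c hc =>
    hφ.cyclicDist_lt_cyclicDist_iff (coe_subset.2 hT) hmaps ha hb (hD hc)

lemma chainW_map (hφ : StrictMonoOn φ T) (hT : T ⊆ Icc 1 n)
    (hmaps : Set.MapsTo φ T (Icc 1 m)) (F F' : ℕ → ℕ) :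
    ∀ (l : List ℕ) (D : Finset ℕ), D ⊆ T →
      (∀ a ∈ l, a ∈ T ∧ F a ∈ T ∧ F' (φ a) = φ (F a)) →
      chainW q m F' (l.map φ) (D.image φ) = chainW q n F l D
  | [], _, _, _ => rfl
  | a :: l, D, hD, hl => by
    obtain ⟨ha, hFa, hF'a⟩ := hl a List.mem_cons_self
    rw [List.map_cons, chainW, chainW, hF'a, stepW_image hφ hT hmaps hD ha hFa,
      ← image_erase_of_injOn hφ.injOn hD hFa,
      chainW_map hφ hT hmaps F F' l _ ((erase_subset _ _).trans hD)
        fun b hb => hl b (List.mem_cons_of_mem a hb)]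

lemma mlqW_image (hφ : StrictMonoOn φ T) (hT : T ⊆ Icc 1 n)
    (hmaps : Set.MapsTo φ T (Icc 1 m)) {A B A' B' : Finset ℕ} {F F' : ℕ → ℕ}
    (hA : A \ B ⊆ T) (hB : B \ A ⊆ T) (hA' : A' \ B' = (A \ B).image φ)
    (hB' : B' \ A' = (B \ A).image φ) (hF : ∀ a ∈ A \ B, F a ∈ T ∧ F' (φ a) = φ (F a)) :
    mlqW q m A' B' F' = mlqW q n A B F := by
  unfold mlqW
  rw [hA', hB', sort_image_of_strictMonoOn (hφ.mono (coe_subset.2 hA))]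
  refine chainW_map hφ hT hmaps F F' _ _ hB fun a ha => ?_
  rw [mem_sort] at ha
  exact ⟨hA ha, hF a ha⟩

end WeightTransport

section Compress

variable {S : Finset ℕ} {n : ℕ}

/-- The rank of `x` in `{1, 2, …} \ S`: on `{1, …, n} \ S` this closes the gaps left by
deleting `S` from `{1, …, n}`. -/
def compress (S : Finset ℕ) (x : ℕ) : ℕ := #(Icc 1 x \ S)

lemma compress_lt_compress {x y : ℕ} (hy : y ∉ S) (hxy : x < y) :
    compress S x < compress S y := by
  apply card_lt_card
  rw [ssubset_iff_of_subset (sdiff_subset_sdiff (Icc_subset_Icc_right hxy.le) le_rfl)]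
  exact ⟨y, by simp [hy]; omega, by simp; omega⟩

lemma compress_strictMonoOn : StrictMonoOn (compress S) {x | x ∉ S} :=
  fun _ _ _ hy hxy => compress_lt_compress hy hxy

lemma compress_injOn : Set.InjOn (compress S) {x | x ∉ S} :=
  compress_strictMonoOn.injOn

lemma compress_of_disjoint {x : ℕ} (h : Disjoint (Icc 1 x) S) : compress S x = x := by
  rw [compress, sdiff_eq_self_of_disjoint h, Nat.card_Icc, Nat.add_sub_cancel]

lemma compress_eq_iff {x y : ℕ} (hx : x ∉ S) (hy : Disjoint (Icc 1 y) S) :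
    compress S x = y ↔ x = y := by
  refine ⟨fun h => ?_, by rintro rfl; exact compress_of_disjoint hy⟩
  rcases lt_trichotomy x y with hlt | heq | hlt
  · rw [compress_of_disjoint (hy.mono_left (Icc_subset_Icc_right hlt.le))] at h
    omega
  · exact heq
  · have := compress_lt_compress hx hlt
    rw [compress_of_disjoint hy] at this
    omega

lemma mem_image_compress_iff {X : Finset ℕ} (hX : Disjoint X S) {y : ℕ}
    (hy : Disjoint (Icc 1 y) S) : y ∈ X.image (compress S) ↔ y ∈ X := by
  refine ⟨fun h => ?_, fun h => mem_image.2 ⟨y, h, compress_of_disjoint hy⟩⟩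
  obtain ⟨x, hx, hxy⟩ := mem_image.1 h
  rwa [← (compress_eq_iff (disjoint_left.1 hX hx) hy).1 hxy]

lemma compress_mem_Icc (hS : S ⊆ Icc 1 n) {x : ℕ} (hx : x ∈ Icc 1 n \ S) :
    compress S x ∈ Icc 1 (n - #S) := by
  have hxx : x ∈ Icc 1 x \ S := by
    simp only [mem_sdiff, mem_Icc] at hx ⊢
    exact ⟨⟨hx.1.1, le_rfl⟩, hx.2⟩
  have hle : compress S x ≤ #(Icc 1 n \ S) :=
    card_le_card (sdiff_subset_sdiff (Icc_subset_Icc_right (mem_Icc.1 (mem_sdiff.1 hx).1).2)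
      le_rfl)
  rw [card_sdiff_of_subset hS, Nat.card_Icc, Nat.add_sub_cancel] at hle
  exact mem_Icc.2 ⟨card_pos.2 ⟨x, hxx⟩, hle⟩

lemma compress_bijOn (hS : S ⊆ Icc 1 n) :
    Set.BijOn (compress S) (Icc 1 n \ S : Finset ℕ) (Icc 1 (n - #S) : Finset ℕ) := by
  have hinj : Set.InjOn (compress S) (Icc 1 n \ S : Finset ℕ) :=
    compress_injOn.mono fun x hx => (mem_sdiff.1 hx).2
  have himage : (Icc 1 n \ S).image (compress S) = Icc 1 (n - #S) := by
    refine eq_of_subset_of_card_le (fun y hy => ?_) ?_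
    · obtain ⟨x, hx, rfl⟩ := mem_image.1 hy
      exact compress_mem_Icc hS hx
    · rw [card_image_of_injOn hinj, card_sdiff_of_subset hS, Nat.card_Icc, Nat.card_Icc]
      omega
  refine ⟨fun x hx => compress_mem_Icc hS hx, hinj, ?_⟩
  rw [← himage, coe_image]
  exact Set.surjOn_image _ _

noncomputable def decompress (n : ℕ) (S : Finset ℕ) : ℕ → ℕ :=
  Function.invFunOn (compress S) (Icc 1 n \ S : Finset ℕ)

lemma decompress_compress {x : ℕ} (hx : x ∈ Icc 1 n \ S) :
    decompress n S (compress S x) = x :=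
  (compress_injOn.mono fun _ hy => (mem_sdiff.1 hy).2).leftInvOn_invFunOn hx

lemma compress_decompress (hS : S ⊆ Icc 1 n) {y : ℕ} (hy : y ∈ Icc 1 (n - #S)) :
    compress S (decompress n S y) = y :=
  (compress_bijOn hS).invOn_invFunOn.2 hy

lemma decompress_mem (hS : S ⊆ Icc 1 n) {y : ℕ} (hy : y ∈ Icc 1 (n - #S)) :
    decompress n S y ∈ Icc 1 n \ S :=
  (compress_bijOn hS).surjOn.mapsTo_invFunOn hy

lemma image_compress_subset (hS : S ⊆ Icc 1 n) {X : Finset ℕ} (hX : X ⊆ Icc 1 n \ S) :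
    X.image (compress S) ⊆ Icc 1 (n - #S) := fun y hy => by
  obtain ⟨a, ha, rfl⟩ := mem_image.1 hy
  exact compress_mem_Icc hS (hX ha)

lemma image_decompress_subset (hS : S ⊆ Icc 1 n) {X : Finset ℕ} (hX : X ⊆ Icc 1 (n - #S)) :
    X.image (decompress n S) ⊆ Icc 1 n \ S := fun a ha => by
  obtain ⟨b, hb, rfl⟩ := mem_image.1 ha
  exact decompress_mem hS (hX hb)

end Compress

abbrev LinkedQueue : Type := Σ AB : Finset ℕ × Finset ℕ, ↥AB.1 ↪ ↥AB.2

namespace LinkedQueue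

abbrev top (x : LinkedQueue) : Finset ℕ := x.1.1

abbrev bot (x : LinkedQueue) : Finset ℕ := x.1.2

abbrev link (x : LinkedQueue) : ℕ → ℕ := extendF x.top x.bot x.2

lemma link_mem {x : LinkedQueue} {a : ℕ} (ha : a ∈ x.top) : x.link a ∈ x.bot := by
  rw [link, extendF, dif_pos ha]
  exact (x.2 ⟨a, ha⟩).2

lemma link_injOn (x : LinkedQueue) : Set.InjOn x.link x.top := fun a ha b hb h => by
  simp only [link, extendF, dif_pos (mem_coe.1 ha), dif_pos (mem_coe.1 hb)] at h
  exact congrArg Subtype.val (x.2.injective (Subtype.ext h))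

lemma link_mem_sdiff {x : LinkedQueue} (htriv : ∀ a ∈ x.top ∩ x.bot, x.link a = a) {a : ℕ}
    (ha : a ∈ x.top \ x.bot) : x.link a ∈ x.bot \ x.top := by
  rw [mem_sdiff] at ha ⊢
  refine ⟨link_mem ha.1, fun hFa => ha.2 ?_⟩
  have hfix := htriv _ (mem_inter.2 ⟨hFa, link_mem ha.1⟩)
  rw [← x.link_injOn hFa ha.1 hfix]
  exact link_mem ha.1

lemma ext {x y : LinkedQueue} (htop : x.top = y.top) (hbot : x.bot = y.bot)
    (hlink : ∀ a ∈ x.top, x.link a = y.link a) : x = y := by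
  obtain ⟨⟨A, B⟩, f⟩ := x
  obtain ⟨⟨A', B'⟩, g⟩ := y
  obtain rfl : A = A' := htop
  obtain rfl : B = B' := hbot
  congr
  ext a
  have h := hlink a a.2
  rwa [link, link, extendF, extendF, dif_pos a.2, dif_pos a.2] at h

end LinkedQueue

open LinkedQueue

def embeddingOfInjOn {A B : Finset ℕ} (G : ℕ → ℕ) (hG : Set.MapsTo G A B)
    (hinj : Set.InjOn G A) : ↥A ↪ ↥B :=
  ⟨fun a => ⟨G a, hG a.2⟩, fun a b h => Subtype.ext (hinj a.2 b.2 (congrArg Subtype.val h))⟩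

lemma extendF_embeddingOfInjOn {A B : Finset ℕ} {G : ℕ → ℕ} (hG : Set.MapsTo G A B)
    (hinj : Set.InjOn G A) {a : ℕ} (ha : a ∈ A) :
    extendF A B (embeddingOfInjOn G hG hinj) a = G a := by
  rw [extendF, dif_pos ha]
  rfl

noncomputable def linkedQueues (k : ℕ) (P : Finset ℕ → Finset ℕ → (ℕ → ℕ) → Prop) :
    Finset LinkedQueue :=
  ((Icc 1 k).powerset ×ˢ (Icc 1 k).powerset).sigma fun AB =>
    {f | (∀ a ∈ AB.1 ∩ AB.2, extendF AB.1 AB.2 f a = a) ∧ P AB.1 AB.2 (extendF AB.1 AB.2 f)}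

lemma mem_linkedQueues {k : ℕ} {P : Finset ℕ → Finset ℕ → (ℕ → ℕ) → Prop} {x : LinkedQueue} :
    x ∈ linkedQueues k P ↔ x.top ⊆ Icc 1 k ∧ x.bot ⊆ Icc 1 k ∧
      (∀ a ∈ x.top ∩ x.bot, x.link a = a) ∧ P x.top x.bot x.link := by
  simp only [linkedQueues, mem_sigma, mem_product, mem_powerset, mem_filter, mem_univ,
    true_and, and_assoc]

lemma linkedQueues_mono {k : ℕ} {P Q : Finset ℕ → Finset ℕ → (ℕ → ℕ) → Prop}
    (h : ∀ A B F, P A B F → Q A B F) : linkedQueues k P ⊆ linkedQueues k Q := fun x hx => by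
  obtain ⟨hA, hB, htriv, hP⟩ := mem_linkedQueues.1 hx
  exact mem_linkedQueues.2 ⟨hA, hB, htriv, h _ _ _ hP⟩

lemma filter_linkedQueues_inter_eq {k : ℕ} (P : Finset ℕ → Finset ℕ → (ℕ → ℕ) → Prop)
    (S : Finset ℕ) :
    (linkedQueues k P).filter (fun x => x.top ∩ x.bot = S) =
      linkedQueues k fun A B F => A ∩ B = S ∧ P A B F := by
  ext x
  simp only [mem_filter, mem_linkedQueues]
  tauto

lemma mlqSum_eq_sum_linkedQueues (q : ℝ) (k : ℕ) (P : Finset ℕ → Finset ℕ → (ℕ → ℕ) → Prop) :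
    mlqSum q k P = ∑ x ∈ linkedQueues k P, mlqW q k x.top x.bot x.link := by
  rw [mlqSum, linkedQueues, sum_sigma, sum_product]
  refine sum_congr rfl fun A _ => sum_congr rfl fun B _ => ?_
  rw [sum_filter]

def condB (s t : ℕ) (A B : Finset ℕ) (F : ℕ → ℕ) : Prop :=
  #A = s ∧ #B = s + t ∧ 1 ∈ A ∧ 2 ∉ A ∧ 1 ∉ B ∧ 2 ∈ B ∧ 2 ∉ A.image F

lemma WB_eq_mlqSum (q : ℝ) (s t n : ℕ) : WB q s t n = mlqSum q n (condB s t) := rfl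

lemma tauB_eq_mlqSum (q : ℝ) (s t n : ℕ) :
    tauB q s t n = mlqSum q n fun A B F => A ∩ B = ∅ ∧ condB s t A B F := rfl

lemma condB_iff_sdiff {s t : ℕ} {A B : Finset ℕ} {F : ℕ → ℕ}
    (htriv : ∀ a ∈ A ∩ B, F a = a) (h2 : 2 ∉ A ∩ B) :
    condB s t A B F ↔ condB (s - #(A ∩ B)) t (A \ B) (B \ A) F := by
  have hA := card_sdiff_add_card_inter A B
  have hB := card_sdiff_add_card_inter B A
  rw [inter_comm B A] at hB
  have himage : 2 ∈ A.image F ↔ 2 ∈ (A \ B).image F := by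
    simp only [mem_image, mem_sdiff]
    constructor
    · rintro ⟨a, ha, hFa⟩
      refine ⟨a, ⟨ha, fun hb => h2 ?_⟩, hFa⟩
      rw [← hFa, htriv a (mem_inter.2 ⟨ha, hb⟩)]
      exact mem_inter.2 ⟨ha, hb⟩
    · rintro ⟨a, ⟨ha, -⟩, hFa⟩
      exact ⟨a, ha, hFa⟩
  rw [mem_inter] at h2
  simp only [condB, mem_sdiff, himage]
  constructor
  · rintro ⟨hcA, hcB, h1A, h2A, h1B, h2B, h2F⟩
    exact ⟨by omega, by omega, ⟨h1A, h1B⟩, fun h => h2A h.1, fun h => h1B h.1, ⟨h2B, h2A⟩, h2F⟩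
  · rintro ⟨hcA, hcB, h1AB, -, -, ⟨h2B, h2A⟩, h2F⟩
    have hpos : 0 < #(A \ B) := card_pos.2 ⟨1, mem_sdiff.2 h1AB⟩
    exact ⟨by omega, by omega, h1AB.1, h2A, h1AB.2, h2B, h2F⟩

lemma condB_image_compress {s t : ℕ} {S P Q : Finset ℕ} {F F' : ℕ → ℕ} (h1 : 1 ∉ S)
    (h2 : 2 ∉ S) (hP : Disjoint P S) (hQ : Disjoint Q S)
    (hF : ∀ a ∈ P, F a ∉ S ∧ F' (compress S a) = compress S (F a)) :
    condB s t (P.image (compress S)) (Q.image (compress S)) F' ↔ condB s t P Q F := by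
  have hcard : ∀ {X : Finset ℕ}, Disjoint X S → #(X.image (compress S)) = #X := fun hX =>
    card_image_of_injOn (compress_injOn.mono fun x hx => disjoint_left.1 hX hx)
  have hone : Disjoint (Icc 1 1) S := by
    rwa [Icc_self, disjoint_singleton_left]
  have htwo : Disjoint (Icc 1 2) S := disjoint_left.2 fun x hx hxS => by
    obtain ⟨hx1, hx2⟩ := mem_Icc.1 hx
    interval_cases x <;> contradiction
  have himage : (P.image (compress S)).image F' = (P.image F).image (compress S) := by
    rw [image_image, image_image]
    exact image_congr fun a ha => (hF a ha).2
  have hFP : Disjoint (P.image F) S := disjoint_left.2 fun y hy => by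
    obtain ⟨a, ha, rfl⟩ := mem_image.1 hy
    exact (hF a ha).1
  simp only [condB, hcard hP, hcard hQ, himage, mem_image_compress_iff hP hone,
    mem_image_compress_iff hP htwo, mem_image_compress_iff hQ hone,
    mem_image_compress_iff hQ htwo, mem_image_compress_iff hFP htwo]

section Relabelling

variable {n s t : ℕ} {S : Finset ℕ}

lemma sdiff_subset_Icc_sdiff {A B : Finset ℕ} (hA : A ⊆ Icc 1 n) (hAB : A ∩ B = S) :
    A \ B ⊆ Icc 1 n \ S := fun a ha => by
  rw [mem_sdiff] at ha ⊢
  exact ⟨hA ha.1, fun haS => ha.2 (mem_inter.1 (hAB ▸ haS)).2⟩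

lemma mapsTo_compress_link_decompress {x : LinkedQueue}
    (hx : x ∈ linkedQueues n fun A B _ => A ∩ B = S) :
    Set.MapsTo (compress S ∘ x.link ∘ decompress n S) ((x.top \ x.bot).image (compress S))
      ((x.bot \ x.top).image (compress S)) := by
  obtain ⟨hA, -, htriv, hAB⟩ := mem_linkedQueues.1 hx
  intro y hy
  obtain ⟨a, ha, rfl⟩ := mem_image.1 hy
  simp only [Function.comp, decompress_compress (sdiff_subset_Icc_sdiff hA hAB ha)]
  exact mem_image_of_mem _ (link_mem_sdiff htriv ha)

lemma injOn_compress_link_decompress {x : LinkedQueue}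
    (hx : x ∈ linkedQueues n fun A B _ => A ∩ B = S) :
    Set.InjOn (compress S ∘ x.link ∘ decompress n S) ((x.top \ x.bot).image (compress S)) := by
  obtain ⟨hA, hB, htriv, hAB⟩ := mem_linkedQueues.1 hx
  have hBA := sdiff_subset_Icc_sdiff hB ((inter_comm _ _).trans hAB)
  intro y hy z hz h
  obtain ⟨a, ha, rfl⟩ := mem_image.1 hy
  obtain ⟨b, hb, rfl⟩ := mem_image.1 hz
  simp only [Function.comp, decompress_compress (sdiff_subset_Icc_sdiff hA hAB ha),
    decompress_compress (sdiff_subset_Icc_sdiff hA hAB hb)] at h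
  have hFab := compress_injOn (mem_sdiff.1 (hBA (link_mem_sdiff htriv ha))).2
    (mem_sdiff.1 (hBA (link_mem_sdiff htriv hb))).2 h
  rw [x.link_injOn (mem_sdiff.1 ha).1 (mem_sdiff.1 hb).1 hFab]

noncomputable def compressQueue (x : LinkedQueue)
    (hx : x ∈ linkedQueues n fun A B _ => A ∩ B = S) : LinkedQueue :=
  ⟨((x.top \ x.bot).image (compress S), (x.bot \ x.top).image (compress S)),
    embeddingOfInjOn _ (mapsTo_compress_link_decompress hx) (injOn_compress_link_decompress hx)⟩

lemma compressQueue_link {x : LinkedQueue} (hx : x ∈ linkedQueues n fun A B _ => A ∩ B = S)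
    {a : ℕ} (ha : a ∈ x.top \ x.bot) :
    (compressQueue x hx).link (compress S a) = compress S (x.link a) := by
  obtain ⟨hA, -, -, hAB⟩ := mem_linkedQueues.1 hx
  refine (extendF_embeddingOfInjOn (mapsTo_compress_link_decompress hx)
    (injOn_compress_link_decompress hx) (mem_image_of_mem _ ha)).trans ?_
  rw [Function.comp_apply, Function.comp_apply,
    decompress_compress (sdiff_subset_Icc_sdiff hA hAB ha)]

lemma decompress_injOn (hS : S ⊆ Icc 1 n) :
    Set.InjOn (decompress n S) (Icc 1 (n - #S) : Finset ℕ) := fun a ha b hb h => by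
  rw [← compress_decompress hS ha, h, compress_decompress hS hb]

lemma image_compress_image_decompress (hS : S ⊆ Icc 1 n) {X : Finset ℕ}
    (hX : X ⊆ Icc 1 (n - #S)) : (X.image (decompress n S)).image (compress S) = X := by
  rw [image_image]
  exact (image_congr fun b hb => compress_decompress hS (hX hb)).trans image_id

lemma image_decompress_image_compress {X : Finset ℕ} (hX : X ⊆ Icc 1 n \ S) :
    (X.image (compress S)).image (decompress n S) = X := by
  rw [image_image]
  exact (image_congr fun a ha => decompress_compress (hX ha)).trans image_id

noncomputable def decompressLink (n : ℕ) (S : Finset ℕ) (F : ℕ → ℕ) (a : ℕ) : ℕ :=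
  if a ∈ S then a else decompress n S (F (compress S a))

lemma decompressLink_of_mem {F : ℕ → ℕ} {a : ℕ} (ha : a ∈ S) : decompressLink n S F a = a :=
  if_pos ha

lemma decompressLink_decompress (hS : S ⊆ Icc 1 n) {F : ℕ → ℕ} {b : ℕ}
    (hb : b ∈ Icc 1 (n - #S)) :
    decompressLink n S F (decompress n S b) = decompress n S (F b) := by
  rw [decompressLink, if_neg (mem_sdiff.1 (decompress_mem hS hb)).2, compress_decompress hS hb]

lemma mapsTo_decompressLink (hS : S ⊆ Icc 1 n) {y : LinkedQueue}
    (hy : y ∈ linkedQueues (n - #S) fun A B _ => A ∩ B = ∅) :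
    Set.MapsTo (decompressLink n S y.link) (y.top.image (decompress n S) ∪ S : Finset ℕ)
      (y.bot.image (decompress n S) ∪ S : Finset ℕ) := by
  obtain ⟨hA, -, -, -⟩ := mem_linkedQueues.1 hy
  intro a ha
  rcases mem_union.1 ha with ha | ha
  · obtain ⟨b, hb, rfl⟩ := mem_image.1 ha
    rw [decompressLink_decompress hS (hA hb)]
    exact mem_union_left _ (mem_image_of_mem _ (link_mem hb))
  · rw [decompressLink_of_mem ha]
    exact mem_union_right _ ha

lemma injOn_decompressLink (hS : S ⊆ Icc 1 n) {y : LinkedQueue}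
    (hy : y ∈ linkedQueues (n - #S) fun A B _ => A ∩ B = ∅) :
    Set.InjOn (decompressLink n S y.link) (y.top.image (decompress n S) ∪ S : Finset ℕ) := by
  obtain ⟨hA, hB, -, -⟩ := mem_linkedQueues.1 hy
  have hnotS : ∀ b ∈ y.top, decompressLink n S y.link (decompress n S b) ∉ S := fun b hb => by
    rw [decompressLink_decompress hS (hA hb)]
    exact (mem_sdiff.1 (decompress_mem hS (hB (link_mem hb)))).2
  intro a ha a' ha' h
  rcases mem_union.1 ha with ha | ha <;> rcases mem_union.1 ha' with ha' | ha'
  · obtain ⟨b, hb, rfl⟩ := mem_image.1 ha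
    obtain ⟨b', hb', rfl⟩ := mem_image.1 ha'
    rw [decompressLink_decompress hS (hA hb), decompressLink_decompress hS (hA hb')] at h
    rw [y.link_injOn hb hb' (decompress_injOn hS (hB (link_mem hb)) (hB (link_mem hb')) h)]
  · obtain ⟨b, hb, rfl⟩ := mem_image.1 ha
    rw [decompressLink_of_mem ha'] at h
    exact absurd (h ▸ ha') (hnotS b hb)
  · obtain ⟨b', hb', rfl⟩ := mem_image.1 ha'
    rw [decompressLink_of_mem ha] at h
    exact absurd (h ▸ ha) (hnotS b' hb')
  · rwa [decompressLink_of_mem ha, decompressLink_of_mem ha'] at h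

noncomputable def decompressQueue (hS : S ⊆ Icc 1 n) (y : LinkedQueue)
    (hy : y ∈ linkedQueues (n - #S) fun A B _ => A ∩ B = ∅) : LinkedQueue :=
  ⟨(y.top.image (decompress n S) ∪ S, y.bot.image (decompress n S) ∪ S),
    embeddingOfInjOn _ (mapsTo_decompressLink hS hy) (injOn_decompressLink hS hy)⟩

lemma decompressQueue_link (hS : S ⊆ Icc 1 n) {y : LinkedQueue}
    (hy : y ∈ linkedQueues (n - #S) fun A B _ => A ∩ B = ∅) {a : ℕ}
    (ha : a ∈ (decompressQueue hS y hy).top) :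
    (decompressQueue hS y hy).link a = decompressLink n S y.link a :=
  extendF_embeddingOfInjOn (mapsTo_decompressLink hS hy) (injOn_decompressLink hS hy) ha

lemma compressQueue_top_inter_bot {x : LinkedQueue}
    (hx : x ∈ linkedQueues n fun A B _ => A ∩ B = S) :
    (compressQueue x hx).top ∩ (compressQueue x hx).bot = ∅ := by
  obtain ⟨hA, hB, -, hAB⟩ := mem_linkedQueues.1 hx
  have hAd := sdiff_subset_Icc_sdiff hA hAB
  have hBd := sdiff_subset_Icc_sdiff hB ((inter_comm _ _).trans hAB)
  have hinj : Set.InjOn (compress S) (↑(x.top \ x.bot) ∪ ↑(x.bot \ x.top)) :=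
    compress_injOn.mono (Set.union_subset (fun a ha => (mem_sdiff.1 (hAd ha)).2)
      fun a ha => (mem_sdiff.1 (hBd ha)).2)
  show (x.top \ x.bot).image (compress S) ∩ (x.bot \ x.top).image (compress S) = ∅
  rw [← image_inter_of_injOn _ _ hinj,
    disjoint_iff_inter_eq_empty.1 disjoint_sdiff_sdiff, image_empty]

lemma disjoint_image_decompress (hS : S ⊆ Icc 1 n) {y : LinkedQueue}
    (hy : y ∈ linkedQueues (n - #S) fun A B _ => A ∩ B = ∅) :
    Disjoint (y.top.image (decompress n S)) (y.bot.image (decompress n S)) := by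
  obtain ⟨hA, hB, -, hAB⟩ := mem_linkedQueues.1 hy
  rw [disjoint_iff_inter_eq_empty, ← image_inter_of_injOn _ _
    ((decompress_injOn hS).mono (Set.union_subset (coe_subset.2 hA) (coe_subset.2 hB))),
    hAB, image_empty]

lemma decompressQueue_top_sdiff_bot (hS : S ⊆ Icc 1 n) {y : LinkedQueue}
    (hy : y ∈ linkedQueues (n - #S) fun A B _ => A ∩ B = ∅) :
    (decompressQueue hS y hy).top \ (decompressQueue hS y hy).bot =
      y.top.image (decompress n S) :=
  union_sdiff_union_of_disjoint (disjoint_image_decompress hS hy)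
    (disjoint_of_subset_left (image_decompress_subset hS (mem_linkedQueues.1 hy).1)
      sdiff_disjoint)

lemma decompressQueue_bot_sdiff_top (hS : S ⊆ Icc 1 n) {y : LinkedQueue}
    (hy : y ∈ linkedQueues (n - #S) fun A B _ => A ∩ B = ∅) :
    (decompressQueue hS y hy).bot \ (decompressQueue hS y hy).top =
      y.bot.image (decompress n S) :=
  union_sdiff_union_of_disjoint (disjoint_image_decompress hS hy).symm
    (disjoint_of_subset_left (image_decompress_subset hS (mem_linkedQueues.1 hy).2.1)
      sdiff_disjoint)

lemma decompressQueue_top_inter_bot (hS : S ⊆ Icc 1 n) {y : LinkedQueue}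
    (hy : y ∈ linkedQueues (n - #S) fun A B _ => A ∩ B = ∅) :
    (decompressQueue hS y hy).top ∩ (decompressQueue hS y hy).bot = S := by
  show (_ ∪ S) ∩ (_ ∪ S) = S
  rw [← inter_union_distrib_right,
    disjoint_iff_inter_eq_empty.1 (disjoint_image_decompress hS hy), empty_union]

lemma compressQueue_mem (hS : S ⊆ Icc 1 n) (h1 : 1 ∉ S) (h2 : 2 ∉ S) {x : LinkedQueue}
    (hx : x ∈ linkedQueues n fun A B F => A ∩ B = S ∧ condB s t A B F) :
    compressQueue x (linkedQueues_mono (fun _ _ _ h => h.1) hx) ∈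
      linkedQueues (n - #S) fun A B F => A ∩ B = ∅ ∧ condB (s - #S) t A B F := by
  have hx' := linkedQueues_mono (fun _ _ _ h => h.1) hx
  obtain ⟨hA, hB, htriv, hAB, hcond⟩ := mem_linkedQueues.1 hx
  have hAd := sdiff_subset_Icc_sdiff hA hAB
  have hBd := sdiff_subset_Icc_sdiff hB ((inter_comm _ _).trans hAB)
  have hdisj := compressQueue_top_inter_bot hx'
  have hcond' := (condB_iff_sdiff htriv (hAB ▸ h2)).1 hcond
  rw [hAB] at hcond'
  refine mem_linkedQueues.2 ⟨image_compress_subset hS hAd, image_compress_subset hS hBd,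
    fun a ha => absurd (hdisj ▸ ha) (notMem_empty a), hdisj, ?_⟩
  refine (condB_image_compress h1 h2 (disjoint_of_subset_left hAd sdiff_disjoint)
    (disjoint_of_subset_left hBd sdiff_disjoint) fun a ha => ?_).2 hcond'
  exact ⟨(mem_sdiff.1 (hBd (link_mem_sdiff htriv ha))).2, compressQueue_link hx' ha⟩

lemma decompressQueue_mem (hS : S ⊆ Icc 1 n) (h1 : 1 ∉ S) (h2 : 2 ∉ S) {y : LinkedQueue}
    (hy : y ∈ linkedQueues (n - #S) fun A B F => A ∩ B = ∅ ∧ condB (s - #S) t A B F) :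
    decompressQueue hS y (linkedQueues_mono (fun _ _ _ h => h.1) hy) ∈
      linkedQueues n fun A B F => A ∩ B = S ∧ condB s t A B F := by
  have hy' := linkedQueues_mono (fun _ _ _ h => h.1) hy
  obtain ⟨hA, hB, -, -, hcond⟩ := mem_linkedQueues.1 hy
  set z := decompressQueue hS y hy'
  have hz := decompressQueue_top_inter_bot hS hy'
  have htriv : ∀ a ∈ z.top ∩ z.bot, z.link a = a := fun a ha => by
    rw [decompressQueue_link hS hy' (mem_inter.1 ha).1, decompressLink_of_mem (hz ▸ ha)]
  refine mem_linkedQueues.2 ⟨union_subset ((image_decompress_subset hS hA).trans sdiff_subset) hS,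
    union_subset ((image_decompress_subset hS hB).trans sdiff_subset) hS, htriv, hz, ?_⟩
  rw [condB_iff_sdiff htriv (hz ▸ h2), hz, decompressQueue_top_sdiff_bot hS hy',
    decompressQueue_bot_sdiff_top hS hy']
  rw [← image_compress_image_decompress hS hA, ← image_compress_image_decompress hS hB] at hcond
  refine (condB_image_compress h1 h2
    (disjoint_of_subset_left (image_decompress_subset hS hA) sdiff_disjoint)
    (disjoint_of_subset_left (image_decompress_subset hS hB) sdiff_disjoint)
    fun a ha => ?_).1 hcond
  obtain ⟨b, hb, rfl⟩ := mem_image.1 ha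
  rw [decompressQueue_link hS hy' (mem_union_left _ ha), decompressLink_decompress hS (hA hb),
    compress_decompress hS (hA hb), compress_decompress hS (hB (link_mem hb))]
  exact ⟨(mem_sdiff.1 (decompress_mem hS (hB (link_mem hb)))).2, rfl⟩

lemma decompressQueue_compressQueue (hS : S ⊆ Icc 1 n) {x : LinkedQueue}
    (hx : x ∈ linkedQueues n fun A B _ => A ∩ B = S)
    (hx' : compressQueue x hx ∈ linkedQueues (n - #S) fun A B _ => A ∩ B = ∅) :
    decompressQueue hS (compressQueue x hx) hx' = x := by
  obtain ⟨hA, hB, htriv, hAB⟩ := mem_linkedQueues.1 hx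
  have hAd := sdiff_subset_Icc_sdiff hA hAB
  have hBd := sdiff_subset_Icc_sdiff hB ((inter_comm _ _).trans hAB)
  have htop : (decompressQueue hS (compressQueue x hx) hx').top = x.top := by
    show ((x.top \ x.bot).image (compress S)).image (decompress n S) ∪ S = x.top
    rw [image_decompress_image_compress hAd, ← hAB, sdiff_union_inter]
  refine LinkedQueue.ext htop ?_ fun a ha => ?_
  · show ((x.bot \ x.top).image (compress S)).image (decompress n S) ∪ S = x.bot
    rw [image_decompress_image_compress hBd, ← hAB, inter_comm, sdiff_union_inter]
  rw [decompressQueue_link hS hx' ha]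
  rw [htop] at ha
  by_cases haS : a ∈ S
  · rw [decompressLink_of_mem haS, htriv a (hAB ▸ haS)]
  have haAB : a ∈ x.top \ x.bot := mem_sdiff.2 ⟨ha, fun hb => haS (hAB ▸ mem_inter.2 ⟨ha, hb⟩)⟩
  calc decompressLink n S (compressQueue x hx).link a
      = decompressLink n S (compressQueue x hx).link (decompress n S (compress S a)) := by
        rw [decompress_compress (hAd haAB)]
    _ = decompress n S ((compressQueue x hx).link (compress S a)) :=
        decompressLink_decompress hS (compress_mem_Icc hS (hAd haAB))
    _ = x.link a := by
        rw [compressQueue_link hx haAB, decompress_compress (hBd (link_mem_sdiff htriv haAB))]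

lemma compressQueue_decompressQueue (hS : S ⊆ Icc 1 n) {y : LinkedQueue}
    (hy : y ∈ linkedQueues (n - #S) fun A B _ => A ∩ B = ∅)
    (hy' : decompressQueue hS y hy ∈ linkedQueues n fun A B _ => A ∩ B = S) :
    compressQueue (decompressQueue hS y hy) hy' = y := by
  obtain ⟨hA, hB, -, -⟩ := mem_linkedQueues.1 hy
  have htop : (compressQueue (decompressQueue hS y hy) hy').top = y.top := by
    show image (compress S) (_ \ _) = y.top
    rw [decompressQueue_top_sdiff_bot, image_compress_image_decompress hS hA]
  refine LinkedQueue.ext htop ?_ fun b hb => ?_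
  · show image (compress S) (_ \ _) = y.bot
    rw [decompressQueue_bot_sdiff_top, image_compress_image_decompress hS hB]
  rw [htop] at hb
  have hψb : decompress n S b ∈ (decompressQueue hS y hy).top \ (decompressQueue hS y hy).bot :=
    (decompressQueue_top_sdiff_bot hS hy) ▸ mem_image_of_mem _ hb
  calc (compressQueue (decompressQueue hS y hy) hy').link b
      = (compressQueue (decompressQueue hS y hy) hy').link (compress S (decompress n S b)) := by
        rw [compress_decompress hS (hA hb)]
    _ = y.link b := by
        rw [compressQueue_link hy' hψb, decompressQueue_link hS hy (mem_sdiff.1 hψb).1,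
          decompressLink_decompress hS (hA hb), compress_decompress hS (hB (link_mem hb))]

lemma mlqW_compressQueue (q : ℝ) (hS : S ⊆ Icc 1 n) {x : LinkedQueue}
    (hx : x ∈ linkedQueues n fun A B _ => A ∩ B = S) :
    mlqW q (n - #S) (compressQueue x hx).top (compressQueue x hx).bot
      (compressQueue x hx).link = mlqW q n x.top x.bot x.link := by
  obtain ⟨hA, hB, htriv, hAB⟩ := mem_linkedQueues.1 hx
  have hAd := sdiff_subset_Icc_sdiff hA hAB
  have hBd := sdiff_subset_Icc_sdiff hB ((inter_comm _ _).trans hAB)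
  have hdisj := disjoint_iff_inter_eq_empty.2 (compressQueue_top_inter_bot hx)
  exact mlqW_image (compress_strictMonoOn.mono fun a ha => (mem_sdiff.1 ha).2) sdiff_subset
    (compress_bijOn hS).mapsTo hAd hBd (sdiff_eq_self_of_disjoint hdisj)
    (sdiff_eq_self_of_disjoint hdisj.symm)
    fun a ha => ⟨hBd (link_mem_sdiff htriv ha), compressQueue_link hx ha⟩

lemma sum_linkedQueues_inter_eq_tauB (q : ℝ) (hS : S ⊆ Icc 1 n) (h1 : 1 ∉ S) (h2 : 2 ∉ S) :
    ∑ x ∈ linkedQueues n (fun A B F => A ∩ B = S ∧ condB s t A B F),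
      mlqW q n x.top x.bot x.link = tauB q (s - #S) t (n - #S) := by
  rw [tauB_eq_mlqSum, mlqSum_eq_sum_linkedQueues]
  exact sum_bij' (fun x hx => compressQueue x (linkedQueues_mono (fun _ _ _ h => h.1) hx))
    (fun y hy => decompressQueue hS y (linkedQueues_mono (fun _ _ _ h => h.1) hy))
    (fun x hx => compressQueue_mem hS h1 h2 hx) (fun y hy => decompressQueue_mem hS h1 h2 hy)
    (fun x _ => decompressQueue_compressQueue hS _ _)
    (fun y _ => compressQueue_decompressQueue hS _ _)
    (fun x _ => (mlqW_compressQueue q hS _).symm)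

end Relabelling

lemma tauB_zero (q : ℝ) (t n : ℕ) : tauB q 0 t n = 0 := by
  rw [tauB_eq_mlqSum, mlqSum_eq_sum_linkedQueues]
  refine sum_eq_zero fun x hx => ?_
  obtain ⟨-, -, -, -, hcard, -, h1, -⟩ := mem_linkedQueues.1 hx
  exact absurd (card_eq_zero.1 hcard ▸ h1) (notMem_empty 1)

lemma WB_eq_sum_powerset (q : ℝ) (s t n : ℕ) :
    WB q s t n = ∑ S ∈ (Icc 3 n).powerset, tauB q (s - #S) t (n - #S) := by
  rw [WB_eq_mlqSum, mlqSum_eq_sum_linkedQueues]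
  have hmaps : ∀ x ∈ linkedQueues n (condB s t), x.top ∩ x.bot ∈ (Icc 3 n).powerset := by
    intro x hx
    obtain ⟨hA, -, -, -, -, -, h2A, h1B, -⟩ := mem_linkedQueues.1 hx
    refine mem_powerset.2 fun a ha => ?_
    obtain ⟨haA, haB⟩ := mem_inter.1 ha
    have := mem_Icc.1 (hA haA)
    have : a ≠ 1 := by rintro rfl; exact h1B haB
    have : a ≠ 2 := by rintro rfl; exact h2A haA
    exact mem_Icc.2 ⟨by omega, by omega⟩
  rw [← sum_fiberwise_of_maps_to hmaps]
  refine sum_congr rfl fun S hS => ?_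
  have hS3 := mem_powerset.1 hS
  rw [filter_linkedQueues_inter_eq]
  exact sum_linkedQueues_inter_eq_tauB q (hS3.trans (Icc_subset_Icc_left (by norm_num)))
    (fun h => by simpa using hS3 h) (fun h => by simpa using hS3 h)

theorem WB_recursion_general (q : ℝ) (s t n : ℕ) :
    WB q s t n =
      ∑ i ∈ Finset.range s, ((n - 2).choose i : ℝ) * tauB q (s - i) t (n - i) := by
  rw [WB_eq_sum_powerset, sum_powerset_apply_card fun i => tauB q (s - i) t (n - i),
    Nat.card_Icc, show n + 1 - 3 + 1 = n - 2 + 1 by omega]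
  simp only [nsmul_eq_mul]
  calc ∑ i ∈ range (n - 2 + 1), ((n - 2).choose i : ℝ) * tauB q (s - i) t (n - i)
      = ∑ i ∈ range (n - 2 + 1 + s), ((n - 2).choose i : ℝ) * tauB q (s - i) t (n - i) :=
        sum_subset (range_subset_range.2 (by omega)) fun i _ hi => by
          rw [Nat.choose_eq_zero_of_lt (by simp only [mem_range] at hi; omega), Nat.cast_zero,
            zero_mul]
    _ = ∑ i ∈ range s, ((n - 2).choose i : ℝ) * tauB q (s - i) t (n - i) :=
        (sum_subset (range_subset_range.2 (by omega)) fun i _ hi => by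
          rw [Nat.sub_eq_zero_of_le (show s ≤ i by simpa using hi), tauB_zero, mul_zero]).symm

/-- Recursion `W^B_{s,t}(n) = Σ_{i=0}^{s-1} C(n-2, i) · τ^B_{s-i,t}(n-i)`. -/
theorem WB_recursion (q : ℝ) (hq0 : 0 ≤ q) (hq1 : q < 1)
    (s t n : ℕ) (hs : 1 ≤ s) (hn : s + t < n) :
    WB q s t n =
      ∑ i ∈ Finset.range s, ((n - 2).choose i : ℝ) * tauB q (s - i) t (n - i) :=
  WB_recursion_general q s t n
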